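/- arXiv:1503.02768 — 3 statements merged into one kernel-verified Lean document; each statement's English description precedes it below -/
import Mathlib

section
/- Let Y_1, …, Y_N be independent Bernoulli random variables with P(Y_i = 1) = q_i, and let w_1, …, w_N > 0 be weights. Let Y_{11}, Y_{12} be Bernoulli random variables with success probabilities q_{11}, q_{12}, such that Y_{11}, Y_{12}, Y_2, …, Y_N are mutually independent, and let w_{11}, w_{12} > 0 satisfy w_{11} + w_{12} = w_1. If q_1 ≤ q_{11}·q_{12}, then for every t > 0, P(∑_{i=1}^N w_i Y_i ≥ t) ≤ P(w_{11}Y_{11} + w_{12}Y_{12} + ∑_{i=2}^N w_i Y_i ≥ t). That is, splitting a bin into parts whose success probabilities multiply to at least the original success probability cannot decrease the upper tail probability of the weighted sum. -/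
/-!
Let `S` be the weighted sum of the bins that are not split, which is independent of the split
bin. The sum is at least `t` exactly when `S ≥ t`, or `S ∈ [t - w 0, t)` and the bin is full.
These events are disjoint, so by independence the tail probability is
`P(S ≥ t) + q₁ · P(S ∈ [t - w 0, t))`. After the split the tail event still contains `S ≥ t`
together with the event that `S ∈ [t - w 0, t)` and both parts are full, which has probability
`q₁₁ q₁₂ · P(S ∈ [t - w 0, t))`.
-/

open MeasureTheory ProbabilityTheory Set

lemma ProbabilityTheory.iIndepFun.indepFun_of_disjoint_range
    {Ω ι κ₁ κ₂ β : Type*} [MeasurableSpace Ω] [MeasurableSpace β] {μ : Measure Ω}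
    [Fintype κ₁] [Fintype κ₂] {f : ι → Ω → β} (hf : iIndepFun f μ)
    (hfm : ∀ i, Measurable (f i)) {g₁ : κ₁ → ι} {g₂ : κ₂ → ι}
    (hg : Disjoint (range g₁) (range g₂)) :
    IndepFun (fun ω k => f (g₁ k) ω) (fun ω k => f (g₂ k) ω) μ := by
  classical
  have hdisj : Disjoint (Finset.univ.image g₁) (Finset.univ.image g₂) := by
    rw [← Finset.disjoint_coe]
    simpa using hg
  exact (hf.indepFun_finset _ _ hdisj hfm).comp
    (φ := fun v k => v ⟨g₁ k, Finset.mem_image_of_mem _ (Finset.mem_univ k)⟩)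
    (ψ := fun v k => v ⟨g₂ k, Finset.mem_image_of_mem _ (Finset.mem_univ k)⟩)
    (by fun_prop) (by fun_prop)

section UpperTail

variable {Ω : Type*} [MeasurableSpace Ω] {μ : Measure Ω} {S : Ω → ℝ} {t c : ℝ}

lemma measure_tail_union_eq_add_mul {β : Type*} [MeasurableSpace β] {V : Ω → β} {A : Set β}
    (hV : Measurable V) (hS : Measurable S) (hA : MeasurableSet A) (hVS : IndepFun V S μ) :
    μ ({ω | t ≤ S ω} ∪ (V ⁻¹' A ∩ S ⁻¹' Ico (t - c) t)) =
      μ {ω | t ≤ S ω} + μ (V ⁻¹' A) * μ (S ⁻¹' Ico (t - c) t) := by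
  have hdisj : Disjoint {ω | t ≤ S ω} (V ⁻¹' A ∩ S ⁻¹' Ico (t - c) t) :=
    disjoint_left.2 fun ω hω h => not_le.2 h.2.2 hω
  rw [measure_union hdisj ((hV hA).inter (hS measurableSet_Ico)),
    hVS.measure_inter_preimage_eq_mul _ _ hA measurableSet_Ico]

lemma measure_tail_mul_add_of_bernoulli {X : Ω → ℝ} (hX : ∀ ω, X ω = 0 ∨ X ω = 1)
    (hXm : Measurable X) (hS : Measurable S) (hXS : IndepFun X S μ) (hc : 0 ≤ c) :
    μ {ω | t ≤ c * X ω + S ω} =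
      μ {ω | t ≤ S ω} + μ {ω | X ω = 1} * μ (S ⁻¹' Ico (t - c) t) := by
  have hset : {ω | t ≤ c * X ω + S ω} = {ω | t ≤ S ω} ∪ (X ⁻¹' {1} ∩ S ⁻¹' Ico (t - c) t) := by
    ext ω
    rcases hX ω with h | h
    · simp [h]
    · simp only [h, mul_one, mem_ofPred_eq, mem_union, mem_inter_iff, mem_preimage,
        mem_singleton_iff, mem_Ico, true_and]
      constructor
      · intro H
        by_cases hSt : t ≤ S ω
        exacts [Or.inl hSt, Or.inr ⟨by linarith, not_le.1 hSt⟩]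
      · rintro (H | ⟨H, -⟩) <;> linarith
  rw [hset]
  exact measure_tail_union_eq_add_mul hXm hS (measurableSet_singleton 1) hXS

lemma le_measure_tail_mul_add_mul_add {X₁ X₂ : Ω → ℝ} {a₁ a₂ : ℝ}
    (hX₁ : ∀ ω, 0 ≤ X₁ ω) (hX₂ : ∀ ω, 0 ≤ X₂ ω) (ha₁ : 0 ≤ a₁) (ha₂ : 0 ≤ a₂)
    (hX₁m : Measurable X₁) (hX₂m : Measurable X₂) (hS : Measurable S)
    (hXS : IndepFun (fun ω => (X₁ ω, X₂ ω)) S μ) (hX₁₂ : IndepFun X₁ X₂ μ) :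
    μ {ω | t ≤ S ω} + μ {ω | X₁ ω = 1} * μ {ω | X₂ ω = 1} * μ (S ⁻¹' Ico (t - (a₁ + a₂)) t) ≤
      μ {ω | t ≤ a₁ * X₁ ω + a₂ * X₂ ω + S ω} := by
  have hboth : (fun ω => (X₁ ω, X₂ ω)) ⁻¹' ({1} ×ˢ {1}) = X₁ ⁻¹' {1} ∩ X₂ ⁻¹' {1} := by
    ext ω; simp
  have hprod : μ {ω | X₁ ω = 1} * μ {ω | X₂ ω = 1} =
      μ ((fun ω => (X₁ ω, X₂ ω)) ⁻¹' ({1} ×ˢ {1})) := by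
    rw [hboth, hX₁₂.measure_inter_preimage_eq_mul _ _ (measurableSet_singleton 1)
      (measurableSet_singleton 1)]
    rfl
  rw [hprod, ← measure_tail_union_eq_add_mul (hX₁m.prodMk hX₂m) hS
    ((measurableSet_singleton 1).prod (measurableSet_singleton 1)) hXS]
  refine measure_mono ?_
  rintro ω (hω | ⟨hω1, hω2⟩)
  · have := mul_nonneg ha₁ (hX₁ ω)
    have := mul_nonneg ha₂ (hX₂ ω)
    simp only [mem_ofPred_eq] at hω ⊢
    linarith
  · simp only [mem_preimage, mem_prod, mem_singleton_iff, mem_Ico] at hω1 hω2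
    simp only [mem_ofPred_eq, hω1.1, hω1.2]
    linarith

end UpperTail

theorem splitting_increases_upper_tail_general
    {Ω : Type*} [MeasurableSpace Ω] (μ : Measure Ω)
    (N : ℕ)
    (Y : Fin (N + 1) → Ω → ℝ) (Y11 Y12 : Ω → ℝ)
    (w : Fin (N + 1) → ℝ) (w11 w12 : ℝ)
    (hw11 : 0 < w11) (hw12 : 0 < w12)
    (hsplit : w11 + w12 = w 0)
    (hYB : ∀ i ω, Y i ω = 0 ∨ Y i ω = 1)
    (hY11B : ∀ ω, Y11 ω = 0 ∨ Y11 ω = 1) (hY12B : ∀ ω, Y12 ω = 0 ∨ Y12 ω = 1)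
    (hYm : ∀ i, Measurable (Y i)) (hY11m : Measurable Y11) (hY12m : Measurable Y12)
    (hindepY : iIndepFun Y μ)
    (Z : Fin (N + 2) → Ω → ℝ)
    (hZ0 : Z 0 = Y11) (hZ1 : Z 1 = Y12)
    (hZs : ∀ i : Fin N, Z i.succ.succ = Y i.succ)
    (hindepZ : iIndepFun Z μ)
    (hq : μ {ω | Y 0 ω = 1} ≤ μ {ω | Y11 ω = 1} * μ {ω | Y12 ω = 1}) :
    ∀ t : ℝ, 0 < t →
      μ {ω | t ≤ ∑ i, w i * Y i ω} ≤
        μ {ω | t ≤ w11 * Y11 ω + w12 * Y12 ω + ∑ i : Fin N, w i.succ * Y i.succ ω} := by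
  intro t _
  set S : Ω → ℝ := fun ω => ∑ i : Fin N, w i.succ * Y i.succ ω
  have hsumm : Measurable fun v : Fin N → ℝ => ∑ i, w i.succ * v i := by fun_prop
  have hSm : Measurable S := by fun_prop
  have hZm : ∀ i, Measurable (Z i) := by
    refine Fin.cases (hZ0 ▸ hY11m) (Fin.cases (hZ1 ▸ hY12m) fun i => ?_)
    exact (hZs i).symm ▸ hYm i.succ
  have hY0S : IndepFun (Y 0) S μ :=
    (hindepY.indepFun_of_disjoint_range hYm (g₁ := fun _ : Unit => 0) (g₂ := Fin.succ)
      (by simp)).comp (measurable_pi_apply ()) hsumm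
  have hYS : IndepFun (fun ω => (Y11 ω, Y12 ω)) S μ := by
    have := (hindepZ.indepFun_of_disjoint_range hZm (g₁ := ![0, 1])
      (g₂ := fun i : Fin N => i.succ.succ)
      (by simp [Fin.succ_succ_ne_one])).comp
      ((measurable_pi_apply 0).prodMk (measurable_pi_apply 1)) hsumm
    simpa [Function.comp_def, hZs, hZ0, hZ1] using this
  have hY1112 : IndepFun Y11 Y12 μ := hZ0 ▸ hZ1 ▸ hindepZ.indepFun (by simp)
  have hw0 : 0 ≤ w 0 := hsplit ▸ by positivity
  calc μ {ω | t ≤ ∑ i, w i * Y i ω}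
      = μ {ω | t ≤ S ω} + μ {ω | Y 0 ω = 1} * μ (S ⁻¹' Ico (t - w 0) t) := by
        simp only [Fin.sum_univ_succ]
        exact measure_tail_mul_add_of_bernoulli (hYB 0) (hYm 0) hSm hY0S hw0
    _ ≤ μ {ω | t ≤ S ω} + μ {ω | Y11 ω = 1} * μ {ω | Y12 ω = 1} *
          μ (S ⁻¹' Ico (t - w 0) t) := by gcongr
    _ ≤ _ := hsplit ▸ le_measure_tail_mul_add_mul_add
          (fun ω => by rcases hY11B ω with h | h <;> simp [h])
          (fun ω => by rcases hY12B ω with h | h <;> simp [h]) hw11.le hw12.le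
          hY11m hY12m hSm hYS hY1112

/-- Splitting a bin cannot decrease the upper tail probability of the weighted sum.
`Y 0, …, Y N` are independent Bernoulli variables with positive weights `w`;
the bin `w 0` is split as `w11 + w12 = w 0` with Bernoulli variables `Y11, Y12`
such that `Y11, Y12, Y 1, …, Y N` (the family `Z`) are mutually independent.
If `P(Y 0 = 1) ≤ P(Y11 = 1)·P(Y12 = 1)`, then for every `t > 0`,
`P(∑ w i Y i ≥ t) ≤ P(w11 Y11 + w12 Y12 + ∑_{i≥1} w i Y i ≥ t)`. -/
theorem splitting_increases_upper_tail
    {Ω : Type*} [MeasurableSpace Ω] (μ : Measure Ω) [IsProbabilityMeasure μ]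
    (N : ℕ)
    (Y : Fin (N + 1) → Ω → ℝ) (Y11 Y12 : Ω → ℝ)
    (w : Fin (N + 1) → ℝ) (w11 w12 : ℝ)
    (hw : ∀ i, 0 < w i) (hw11 : 0 < w11) (hw12 : 0 < w12)
    (hsplit : w11 + w12 = w 0)
    (hYB : ∀ i ω, Y i ω = 0 ∨ Y i ω = 1)
    (hY11B : ∀ ω, Y11 ω = 0 ∨ Y11 ω = 1) (hY12B : ∀ ω, Y12 ω = 0 ∨ Y12 ω = 1)
    (hYm : ∀ i, Measurable (Y i)) (hY11m : Measurable Y11) (hY12m : Measurable Y12)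
    (hindepY : iIndepFun Y μ)
    (Z : Fin (N + 2) → Ω → ℝ)
    (hZ0 : Z 0 = Y11) (hZ1 : Z 1 = Y12)
    (hZs : ∀ i : Fin N, Z i.succ.succ = Y i.succ)
    (hindepZ : iIndepFun Z μ)
    (hq : μ {ω | Y 0 ω = 1} ≤ μ {ω | Y11 ω = 1} * μ {ω | Y12 ω = 1}) :
    ∀ t : ℝ, 0 < t →
      μ {ω | t ≤ ∑ i, w i * Y i ω} ≤
        μ {ω | t ≤ w11 * Y11 ω + w12 * Y12 ω + ∑ i : Fin N, w i.succ * Y i.succ ω} :=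
  splitting_increases_upper_tail_general μ N Y Y11 Y12 w w11 w12 hw11 hw12 hsplit hYB hY11B hY12B
    hYm hY11m hY12m hindepY Z hZ0 hZ1 hZs hindepZ hq
end

section
/- (Binary stochastic monotonicity.) Let X be a random variable taking values in a linearly ordered countable set 𝒳 and let Y be a Bernoulli random variable, both defined on the same probability space. Suppose Y is stochastically non-increasing in X, i.e., for all a, b ∈ 𝒳 with a ≤ b, P(Y = 1 ∧ X = b)·P(X = a) ≤ P(Y = 1 ∧ X = a)·P(X = b). Then X is stochastically non-increasing in Y, i.e., for every x ∈ 𝒳, P(X > x ∧ Y = 1)·P(Y = 0) ≤ P(X > x ∧ Y = 0)·P(Y = 1). -/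
open MeasureTheory ENNReal

private lemma measure_decomp' {Ω 𝒳 : Type*} [MeasurableSpace Ω] [Countable 𝒳]
    (μ : Measure Ω) (X : Ω → 𝒳) (s : Set Ω) (P : 𝒳 → Prop)
    (hm : ∀ a : 𝒳, MeasurableSet (s ∩ {ω | X ω = a})) :
    μ {ω | ω ∈ s ∧ P (X ω)} = ∑' a : {a : 𝒳 // P a}, μ (s ∩ {ω | X ω = ↑a}) := by
  have he : {ω | ω ∈ s ∧ P (X ω)} = ⋃ a : {a : 𝒳 // P a}, (s ∩ {ω | X ω = ↑a}) := by
    ext ω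
    simp only [Set.mem_setOf_eq, Set.mem_iUnion, Set.mem_inter_iff]
    constructor
    · rintro ⟨hs, hP⟩; exact ⟨⟨X ω, hP⟩, hs, rfl⟩
    · rintro ⟨⟨a, ha⟩, hs, hXa⟩; exact ⟨hs, by rw [hXa]; exact ha⟩
  rw [he]
  refine measure_iUnion ?_ fun a => hm ↑a
  intro a b hab
  simp only [Function.onFun]
  apply Set.disjoint_left.mpr
  rintro ω ⟨-, h1⟩ ⟨-, h2⟩
  exact hab (Subtype.ext ((h1 : X ω = ↑a).symm.trans h2))

/-- Binary stochastic monotonicity: if the Bernoulli variable `Y` is stochastically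
non-increasing in `X` (expressed by cross products of joint and marginal
probabilities, avoiding division), then `X` is stochastically non-increasing in `Y`:
for every `x`, `P(X > x ∧ Y = 1)·P(Y = 0) ≤ P(X > x ∧ Y = 0)·P(Y = 1)`. -/
theorem binary_stochastic_monotonicity
    {Ω 𝒳 : Type*} [MeasurableSpace Ω] [LinearOrder 𝒳] [Countable 𝒳]
    [MeasurableSpace 𝒳] [MeasurableSingletonClass 𝒳]
    (μ : Measure Ω) [IsProbabilityMeasure μ]
    (X : Ω → 𝒳) (Y : Ω → ℝ) (hX : Measurable X) (hY : Measurable Y)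
    (hY01 : ∀ ω, Y ω = 0 ∨ Y ω = 1)
    (hdown : ∀ a b : 𝒳, a ≤ b →
      μ {ω | Y ω = 1 ∧ X ω = b} * μ {ω | X ω = a} ≤
        μ {ω | Y ω = 1 ∧ X ω = a} * μ {ω | X ω = b}) :
    ∀ x : 𝒳,
      μ {ω | x < X ω ∧ Y ω = 1} * μ {ω | Y ω = 0} ≤
        μ {ω | x < X ω ∧ Y ω = 0} * μ {ω | Y ω = 1} := by
  classical
  intro x
  set q : 𝒳 → ℝ≥0∞ := fun a => μ {ω | Y ω = 1 ∧ X ω = a} with hq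
  set r : 𝒳 → ℝ≥0∞ := fun a => μ {ω | Y ω = 0 ∧ X ω = a} with hr
  have hmq : ∀ a : 𝒳, MeasurableSet {ω | Y ω = 1 ∧ X ω = a} := by
    intro a
    have : {ω | Y ω = 1 ∧ X ω = a} = Y ⁻¹' {1} ∩ X ⁻¹' {a} := by
      ext ω; simp [Set.mem_preimage]
    rw [this]
    exact (hY (measurableSet_singleton 1)).inter (hX (measurableSet_singleton a))
  have hmr : ∀ a : 𝒳, MeasurableSet {ω | Y ω = 0 ∧ X ω = a} := by
    intro a
    have : {ω | Y ω = 0 ∧ X ω = a} = Y ⁻¹' {0} ∩ X ⁻¹' {a} := by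
      ext ω; simp [Set.mem_preimage]
    rw [this]
    exact (hY (measurableSet_singleton 0)).inter (hX (measurableSet_singleton a))
  -- marginal decomposition
  have hp : ∀ a : 𝒳, μ {ω | X ω = a} = q a + r a := by
    intro a
    have hsets : {ω | X ω = a} = {ω | Y ω = 1 ∧ X ω = a} ∪ {ω | Y ω = 0 ∧ X ω = a} := by
      ext ω
      constructor
      · intro h
        rcases hY01 ω with h0 | h1
        · exact Or.inr ⟨h0, h⟩
        · exact Or.inl ⟨h1, h⟩
      · rintro (⟨_, h⟩ | ⟨_, h⟩) <;> exact h
    have hdisj : Disjoint {ω | Y ω = 1 ∧ X ω = a} {ω | Y ω = 0 ∧ X ω = a} := by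
      apply Set.disjoint_left.mpr
      rintro ω ⟨h1, -⟩ ⟨h0, -⟩
      exact one_ne_zero (h1.symm.trans h0)
    rw [hsets, measure_union hdisj (hmr a)]
  -- termwise key inequality
  have key : ∀ a b : 𝒳, a ≤ b → q b * r a ≤ r b * q a := by
    intro a b hab
    have h := hdown a b hab
    rw [hp a, hp b, mul_add, mul_add, mul_comm (q a) (q b)] at h
    have hfin : q b * q a ≠ ⊤ := ENNReal.mul_ne_top (measure_ne_top μ _) (measure_ne_top μ _)
    have h2 : q b * r a ≤ q a * r b :=
      (WithTop.add_le_add_iff_left hfin).mp h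
    calc q b * r a ≤ q a * r b := h2
      _ = r b * q a := mul_comm _ _
  -- decompositions of the four corner probabilities
  have decompQB : μ {ω | x < X ω ∧ Y ω = 1}
      = ∑' b : {b : 𝒳 // x < b}, q ↑b := by
    have := measure_decomp' μ X {ω | Y ω = 1} (fun b => x < b)
      (fun a => by
        have : {ω | Y ω = 1} ∩ {ω | X ω = a} = {ω | Y ω = 1 ∧ X ω = a} := by
          ext ω; simp [Set.mem_inter_iff]
        rw [this]; exact hmq a)
    have hset : {ω | x < X ω ∧ Y ω = 1} = {ω | ω ∈ {ω | Y ω = 1} ∧ x < X ω} := by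
      ext ω; simp [and_comm]
    rw [hset, this]
    rfl
  have decompRB : μ {ω | x < X ω ∧ Y ω = 0}
      = ∑' b : {b : 𝒳 // x < b}, r ↑b := by
    have := measure_decomp' μ X {ω | Y ω = 0} (fun b => x < b)
      (fun a => by
        have : {ω | Y ω = 0} ∩ {ω | X ω = a} = {ω | Y ω = 0 ∧ X ω = a} := by
          ext ω; simp [Set.mem_inter_iff]
        rw [this]; exact hmr a)
    have hset : {ω | x < X ω ∧ Y ω = 0} = {ω | ω ∈ {ω | Y ω = 0} ∧ x < X ω} := by
      ext ω; simp [and_comm]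
    rw [hset, this]
    rfl
  have decompQA : μ {ω | ¬ x < X ω ∧ Y ω = 1}
      = ∑' a : {a : 𝒳 // ¬ x < a}, q ↑a := by
    have := measure_decomp' μ X {ω | Y ω = 1} (fun b => ¬ x < b)
      (fun a => by
        have : {ω | Y ω = 1} ∩ {ω | X ω = a} = {ω | Y ω = 1 ∧ X ω = a} := by
          ext ω; simp [Set.mem_inter_iff]
        rw [this]; exact hmq a)
    have hset : {ω | ¬ x < X ω ∧ Y ω = 1} = {ω | ω ∈ {ω | Y ω = 1} ∧ ¬ x < X ω} := by
      ext ω; simp [and_comm]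
    rw [hset, this]
    rfl
  have decompRA : μ {ω | ¬ x < X ω ∧ Y ω = 0}
      = ∑' a : {a : 𝒳 // ¬ x < a}, r ↑a := by
    have := measure_decomp' μ X {ω | Y ω = 0} (fun b => ¬ x < b)
      (fun a => by
        have : {ω | Y ω = 0} ∩ {ω | X ω = a} = {ω | Y ω = 0 ∧ X ω = a} := by
          ext ω; simp [Set.mem_inter_iff]
        rw [this]; exact hmr a)
    have hset : {ω | ¬ x < X ω ∧ Y ω = 0} = {ω | ω ∈ {ω | Y ω = 0} ∧ ¬ x < X ω} := by
      ext ω; simp [and_comm]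
    rw [hset, this]
    rfl
  -- split the marginals of Y at x
  have hmA : ∀ c : ℝ, MeasurableSet {ω | ¬ x < X ω ∧ Y ω = c} := by
    intro c
    have : {ω | ¬ x < X ω ∧ Y ω = c} = X ⁻¹' {a | ¬ x < a} ∩ Y ⁻¹' {c} := by
      ext ω; simp [Set.mem_preimage]
    rw [this]
    exact (hX ((Set.to_countable _).measurableSet)).inter (hY (measurableSet_singleton c))
  have hsplit : ∀ c : ℝ, μ {ω | Y ω = c}
      = μ {ω | x < X ω ∧ Y ω = c} + μ {ω | ¬ x < X ω ∧ Y ω = c} := by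
    intro c
    have hsets : {ω | Y ω = c}
        = {ω | x < X ω ∧ Y ω = c} ∪ {ω | ¬ x < X ω ∧ Y ω = c} := by
      ext ω
      constructor
      · intro h
        by_cases hx : x < X ω
        · exact Or.inl ⟨hx, h⟩
        · exact Or.inr ⟨hx, h⟩
      · rintro (⟨-, h⟩ | ⟨-, h⟩) <;> exact h
    have hdisj : Disjoint {ω | x < X ω ∧ Y ω = c} {ω | ¬ x < X ω ∧ Y ω = c} := by
      apply Set.disjoint_left.mpr
      rintro ω ⟨h1, -⟩ ⟨h2, -⟩
      exact h2 h1
    rw [hsets, measure_union hdisj (hmA c)]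
  rw [hsplit 0, hsplit 1, mul_add, mul_add]
  refine add_le_add (le_of_eq (mul_comm _ _)) ?_
  rw [decompQB, decompRA, decompRB, decompQA]
  calc (∑' b : {b : 𝒳 // x < b}, q ↑b) * (∑' a : {a : 𝒳 // ¬ x < a}, r ↑a)
      = ∑' b : {b : 𝒳 // x < b}, q ↑b * ∑' a : {a : 𝒳 // ¬ x < a}, r ↑a :=
        ENNReal.tsum_mul_right.symm
    _ = ∑' b : {b : 𝒳 // x < b}, ∑' a : {a : 𝒳 // ¬ x < a}, q ↑b * r ↑a :=
        tsum_congr fun b => ENNReal.tsum_mul_left.symm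
    _ ≤ ∑' b : {b : 𝒳 // x < b}, ∑' a : {a : 𝒳 // ¬ x < a}, r ↑b * q ↑a :=
        ENNReal.tsum_le_tsum fun b => ENNReal.tsum_le_tsum fun a =>
          key ↑a ↑b ((not_lt.mp a.2).trans b.2.le)
    _ = ∑' b : {b : 𝒳 // x < b}, r ↑b * ∑' a : {a : 𝒳 // ¬ x < a}, q ↑a :=
        tsum_congr fun b => ENNReal.tsum_mul_left
    _ = (∑' b : {b : 𝒳 // x < b}, r ↑b) * (∑' a : {a : 𝒳 // ¬ x < a}, q ↑a) :=
        ENNReal.tsum_mul_right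
end

section
/- (Variance bound after thresholding.) Let n ≥ 1 be a natural number, let θ be a real number with 1 < θ < n, and let (w_i)_{i∈J} be a finite family of real weights with θ/n ≤ w_i < 2θ/n for every i and ∑_{i∈J} w_i ≤ 1. Then ∑_{i∈J} w_i²·(1-w_i)^n·(1-(1-w_i)^n) ≤ (θ/n)·e^{-θ}. -/
lemma te_mono {θ t : ℝ} (hθ : 1 ≤ θ) (ht : θ ≤ t) :
    t * Real.exp (-t) ≤ θ * Real.exp (-θ) := by
  have h1 : t - θ + 1 ≤ Real.exp (t - θ) := Real.add_one_le_exp _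
  have h2 : Real.exp (-t) * Real.exp (t - θ) = Real.exp (-θ) := by
    rw [← Real.exp_add]; ring_nf
  have h3 : (0:ℝ) < Real.exp (-t) := Real.exp_pos _
  have h4 : t ≤ θ * (t - θ + 1) := by nlinarith
  have h5 : θ * (Real.exp (-t) * (t - θ + 1)) ≤ θ * (Real.exp (-t) * Real.exp (t - θ)) := by
    apply mul_le_mul_of_nonneg_left _ (by linarith)
    exact mul_le_mul_of_nonneg_left h1 h3.le
  have h6 : Real.exp (-t) * t ≤ Real.exp (-t) * (θ * (t - θ + 1)) :=
    mul_le_mul_of_nonneg_left h4 h3.le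
  nlinarith [h5, h6, h2]

/-- Variance bound after thresholding: if `1 < θ < n` and the weights `w i`, `i ∈ J`,
satisfy `θ/n ≤ w i < 2θ/n` and `∑_{i∈J} w i ≤ 1`, then the Bernstein variance proxy
of the missing-mass indicators satisfies
`∑_{i∈J} w i² (1-w i)^n (1-(1-w i)^n) ≤ (θ/n)·e^{-θ}`. -/
theorem variance_bound_after_thresholding
    (n : ℕ) (hn : 1 ≤ n) (θ : ℝ) (hθ1 : 1 < θ) (hθn : θ < n)
    {ι : Type*} (J : Finset ι) (w : ι → ℝ)
    (hw : ∀ i ∈ J, θ / n ≤ w i ∧ w i < 2 * θ / n)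
    (hwsum : ∑ i ∈ J, w i ≤ 1) :
    ∑ i ∈ J, (w i) ^ 2 * (1 - w i) ^ n * (1 - (1 - w i) ^ n) ≤
      (θ / n) * Real.exp (-θ) := by
  have hnpos : (0:ℝ) < n := by positivity
  have hθnpos : (0:ℝ) < θ / n := by positivity
  have hC : (0:ℝ) ≤ θ / n * Real.exp (-θ) := by positivity
  have hwnonneg : ∀ j ∈ J, 0 ≤ w j := fun j hj => le_trans hθnpos.le (hw j hj).1
  calc ∑ i ∈ J, (w i) ^ 2 * (1 - w i) ^ n * (1 - (1 - w i) ^ n)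
      ≤ ∑ i ∈ J, w i * (θ / n * Real.exp (-θ)) := by
        apply Finset.sum_le_sum
        intro i hi
        have hwi : θ / n ≤ w i := (hw i hi).1
        have hwpos : 0 < w i := lt_of_lt_of_le hθnpos hwi
        have hwle1 : w i ≤ 1 := le_trans
          (Finset.single_le_sum hwnonneg hi) hwsum
        have h1w : 0 ≤ 1 - w i := by linarith
        have hpow1 : (1 - w i) ^ n ≤ 1 := pow_le_one₀ h1w (by linarith)
        have hpow0 : 0 ≤ (1 - w i) ^ n := pow_nonneg h1w n
        -- (1-w)^n ≤ exp(-(n*w))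
        have hexp : (1 - w i) ^ n ≤ Real.exp (-(n * w i)) := by
          have : (1 - w i) ≤ Real.exp (-(w i)) := by
            linarith [Real.add_one_le_exp (-(w i))]
          calc (1 - w i) ^ n ≤ (Real.exp (-(w i))) ^ n :=
                pow_le_pow_left₀ h1w this n
            _ = Real.exp (-(n * w i)) := by
                rw [← Real.exp_nat_mul]; ring_nf
        have ht : θ ≤ n * w i := by
          rw [div_le_iff₀ hnpos] at hwi; linarith
        have hkey : w i * (1 - w i) ^ n ≤ θ / n * Real.exp (-θ) := by
          have h5 : (n : ℝ) * w i * Real.exp (-(n * w i)) ≤ θ * Real.exp (-θ) :=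
            te_mono hθ1.le ht
          have h6 : w i * (1 - w i) ^ n ≤ w i * Real.exp (-(n * w i)) :=
            mul_le_mul_of_nonneg_left hexp hwpos.le
          rw [div_mul_eq_mul_div, le_div_iff₀ hnpos]
          nlinarith
        have hfac : 0 ≤ 1 - (1 - w i) ^ n := by linarith
        have : (w i) ^ 2 * (1 - w i) ^ n * (1 - (1 - w i) ^ n)
            ≤ w i * (w i * (1 - w i) ^ n) * 1 := by
          have := mul_le_mul_of_nonneg_left
            (show 1 - (1 - w i) ^ n ≤ 1 by linarith)
            (show 0 ≤ w i * (w i * (1 - w i) ^ n) by positivity)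
          nlinarith
        calc (w i) ^ 2 * (1 - w i) ^ n * (1 - (1 - w i) ^ n)
            ≤ w i * (w i * (1 - w i) ^ n) * 1 := this
          _ = w i * (w i * (1 - w i) ^ n) := by ring
          _ ≤ w i * (θ / n * Real.exp (-θ)) :=
              mul_le_mul_of_nonneg_left hkey hwpos.le
    _ = (∑ i ∈ J, w i) * (θ / n * Real.exp (-θ)) := by
        rw [← Finset.sum_mul]
    _ ≤ 1 * (θ / n * Real.exp (-θ)) :=
        mul_le_mul_of_nonneg_right hwsum hC
    _ = θ / n * Real.exp (-θ) := one_mul _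
end
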